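/- arXiv:1310.4131 — 2 statements merged into one kernel-verified Lean document; each statement's English description precedes it below -/
import Mathlib

section
/- For every prime p, every v ∈ {0,...,p-1}, and every natural number n, A2(v + n p) ≡ A2(v) A2(n) (mod p), where A2(n) = \sum_{k=0}^n \binom{n}{k}^2 \binom{n+k}{k}. -/
/-!
By Lucas's theorem, for `v, a < p` the binomial coefficient `C(v + n p, a + b p)` is
`C(v, a) C(n, b)` modulo `p`. The same holds for `C(v + a + m p, a + b p) ≡ C(v + a, a) C(m, b)`
even when `v + a` carries past `p`, because then both sides vanish. Hence the summand of `A2`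
factors along the base-`p` splitting `k = a + b p`, and so does the whole sum.
-/

def A2 (n : ℕ) : ℤ :=
  ∑ k ∈ Finset.range (n + 1), (n.choose k : ℤ) ^ 2 * ((n + k).choose k : ℤ)

open Finset

theorem Finset.sum_range_mul_eq_sum_sum {M : Type*} [AddCommMonoid M] (f : ℕ → M) (p n : ℕ) :
    ∑ k ∈ range (n * p), f k = ∑ b ∈ range n, ∑ a ∈ range p, f (a + b * p) := by
  induction n with
  | zero => simp
  | succ n ih =>
    rw [Nat.succ_mul, sum_range_add, ih, sum_range_succ]
    simp only [add_comm]

theorem sum_range_add_mul_eq_mul {R : Type*} [CommSemiring R] {p : ℕ} {f : ℕ → ℕ → R}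
    (hf_zero : ∀ m k, m < k → f m k = 0) {v n : ℕ} (hv : v < p)
    (hf_mul : ∀ a b, a < p → f (v + n * p) (a + b * p) = f v a * f n b) :
    ∑ k ∈ range (v + n * p + 1), f (v + n * p) k =
      (∑ a ∈ range (v + 1), f v a) * ∑ b ∈ range (n + 1), f n b := by
  have h_row : ∑ a ∈ range (v + 1), f v a = ∑ a ∈ range p, f v a :=
    sum_subset (range_subset_range.mpr hv) fun a _ ha =>
      hf_zero v a (by simpa using ha)
  calc ∑ k ∈ range (v + n * p + 1), f (v + n * p) k
      = ∑ k ∈ range ((n + 1) * p), f (v + n * p) k :=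
        sum_subset (range_subset_range.mpr (by nlinarith)) fun k _ hk =>
          hf_zero _ k (by simpa using hk)
    _ = ∑ b ∈ range (n + 1), ∑ a ∈ range p, f v a * f n b := by
        rw [sum_range_mul_eq_sum_sum]
        exact sum_congr rfl fun b _ => sum_congr rfl fun a ha => hf_mul a b (mem_range.mp ha)
    _ = (∑ a ∈ range (v + 1), f v a) * ∑ b ∈ range (n + 1), f n b := by
        rw [h_row, mul_sum]
        simp only [sum_mul]

section Lucas

variable (p : ℕ) [Fact p.Prime]

theorem Choose.cast_choose_add_mul_add_mul {v a : ℕ} (hv : v < p) (ha : a < p) (n b : ℕ) :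
    ((v + n * p).choose (a + b * p) : ZMod p) = v.choose a * n.choose b := by
  have hp : 0 < p := (Fact.out : p.Prime).pos
  have := (ZMod.intCast_eq_intCast_iff _ _ _).mpr
    (Choose.choose_modEq_choose_mod_mul_choose_div (n := v + n * p) (k := a + b * p) (p := p))
  push_cast at this
  rwa [Nat.add_mul_mod_self_right, Nat.add_mul_mod_self_right, Nat.mod_eq_of_lt hv,
    Nat.mod_eq_of_lt ha, Nat.add_mul_div_right _ _ hp, Nat.add_mul_div_right _ _ hp,
    Nat.div_eq_of_lt hv, Nat.div_eq_of_lt ha, zero_add, zero_add] at this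

theorem Choose.cast_choose_add_add_mul {v a : ℕ} (hv : v < p) (ha : a < p) (m b : ℕ) :
    ((v + a + m * p).choose (a + b * p) : ZMod p) = (v + a).choose a * m.choose b := by
  rcases lt_or_ge (v + a) p with hva | hva
  · exact Choose.cast_choose_add_mul_add_mul p hva ha m b
  · have hlt : v + a - p < p := by omega
    have hcarry : (v + a - p).choose a = 0 := Nat.choose_eq_zero_of_lt (by omega)
    have hlhs : v + a + m * p = (v + a - p) + (m + 1) * p := by
      rw [add_one_mul]; omega
    have hva_zero : ((v + a).choose a : ZMod p) = 0 := by
      simpa [hcarry, Nat.sub_add_cancel hva] using Choose.cast_choose_add_mul_add_mul p hlt ha 1 0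
    rw [hlhs, Choose.cast_choose_add_mul_add_mul p hlt ha, hcarry, hva_zero]
    simp

theorem apery2_summand_add_mul {v a : ℕ} (hv : v < p) (ha : a < p) (n b : ℕ) :
    ((v + n * p).choose (a + b * p) : ZMod p) ^ 2 *
        ((v + n * p + (a + b * p)).choose (a + b * p) : ZMod p) =
      ((v.choose a : ZMod p) ^ 2 * ((v + a).choose a : ZMod p)) *
        ((n.choose b : ZMod p) ^ 2 * ((n + b).choose b : ZMod p)) := by
  have hsum : v + n * p + (a + b * p) = v + a + (n + b) * p := by ring
  rw [hsum, Choose.cast_choose_add_mul_add_mul p hv ha, Choose.cast_choose_add_add_mul p hv ha]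
  ring

end Lucas

theorem apery2_lucas (p : ℕ) (hp : p.Prime) (v n : ℕ) (hv : v < p) :
    A2 (v + n * p) ≡ A2 v * A2 n [ZMOD p] := by
  have : Fact p.Prime := ⟨hp⟩
  rw [← ZMod.intCast_eq_intCast_iff]
  push_cast [A2]
  exact sum_range_add_mul_eq_mul (f := fun m k => (m.choose k : ZMod p) ^ 2 * (m + k).choose k)
    (fun m k hmk => by simp [Nat.choose_eq_zero_of_lt hmk]) hv
    fun a b ha => apery2_summand_add_mul p hv ha n b
end

section
/- Let e, f be disjoint tuples of vectors in ℕ^d with |e| = |f| such that the Landau function Δ(x) = \sum_i ⌊e_i·x⌋ − \sum_i ⌊f_i·x⌋ satisfies Δ(x) ≥ 1 for all x ∈ [0,1)^d for which some component vector d of e or f has d·x ≥ 1. Then for every prime p, the family Q_{e,f}(n) = \prod_i (e_i·n)!/\prod_i (f_i·n)! is integer-valued and satisfies the p-Lucas property: Q(a + n p) ≡ Q(a) Q(n) (mod p) for all a ∈ {0,...,p-1}^d and n ∈ ℕ^d. -/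
open Finset

/-- The factorial ratio `Q_{e,f}(m) = ∏ (e_i·m)! / ∏ (f_i·m)!` as a rational number. -/
def Qef {d u v : ℕ} (e : Fin u → Fin d → ℕ) (f : Fin v → Fin d → ℕ)
    (m : Fin d → ℕ) : ℚ :=
  (∏ i, ((∑ j, e i j * m j).factorial : ℚ)) / ∏ i, ((∑ j, f i j * m j).factorial : ℚ)

/-- Landau's function `Δ_{e,f}(x) = ∑ ⌊e_i·x⌋ − ∑ ⌊f_i·x⌋`. -/
noncomputable def Landau {d u v : ℕ} (e : Fin u → Fin d → ℕ) (f : Fin v → Fin d → ℕ)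
    (x : Fin d → ℝ) : ℤ :=
  (∑ i, ⌊∑ j, (e i j : ℝ) * x j⌋) - ∑ i, ⌊∑ j, (f i j : ℝ) * x j⌋


/-!
By Legendre's formula, the `p`-adic valuation of `Q(n)` is `∑_{k ≥ 1} Δ(n / p^k)`, and since the
columns of `e` and `f` have equal sums, `Δ` is `ℤ^d`-periodic, so each term equals `Δ` at a point
of `[0,1)^d`. There `Δ ≥ 0`: off `D` all the floors vanish. This gives integrality.

For the Lucas congruence put `m = a + n p`. If `a / p ∈ D`, then `Δ(m / p) = Δ(a / p) ≥ 1`, so `p`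
divides both `Q(m)` and `Q(a)`. Otherwise every `e_i·a` and `f_i·a` is `< p`, and by Wilson's
theorem `(p q + r)! = p^q q! r! U` with `U ≡ (-1)^q (mod p)`; the powers of `p` and the signs are
the same in numerator and denominator, leaving `Q(m) ≡ Q(a) Q(n)`.
-/

open scoped Nat

lemma natCast_ascFactorial_congr {p m n : ℕ} (h : (m : ZMod p) = n) (k : ℕ) :
    (m.ascFactorial k : ZMod p) = n.ascFactorial k := by
  rw [Nat.cast_ascFactorial, Nat.cast_ascFactorial, h]

lemma exists_factorial_mul_add_eq {p : ℕ} (hp : p.Prime) {r : ℕ} (hr : r < p) (q : ℕ) :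
    ∃ U : ℕ, (p * q + r)! = p ^ q * q ! * r ! * U ∧ (U : ZMod p) = (-1) ^ q := by
  have := Fact.mk hp
  obtain ⟨s, hs⟩ : ∃ s, r + s + 1 = p := ⟨p - r - 1, by omega⟩
  have hwilson : ((r ! * (r + 1).ascFactorial s : ℕ) : ZMod p) = -1 := by
    rw [Nat.factorial_mul_ascFactorial, show r + s = p - 1 by omega, ZMod.wilsons_lemma]
  induction q with
  | zero => exact ⟨1, by simp, by simp⟩
  | succ q ih =>
    obtain ⟨U, hU, hUp⟩ := ih
    -- `p * (q + 1)` is the only multiple of `p` among `p * q + r + 1, …, p * (q + 1) + r`; the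
    -- other factors are `r + 1, …, p - 1, 1, …, r` mod `p`, whose product is `(p - 1)! ≡ -1`.
    have hblock :
        (p * (q + 1))! = p * (q + 1) * ((p * q + r)! * (p * q + r + 1).ascFactorial s) := by
      rw [Nat.factorial_mul_ascFactorial, show p * (q + 1) = p * q + r + s + 1 by rw [← hs]; ring,
        Nat.factorial_succ]
    refine ⟨U * (p * q + r + 1).ascFactorial s * (p * (q + 1) + 1).ascFactorial r, ?_, ?_⟩
    · rw [← Nat.factorial_mul_ascFactorial, hblock, hU, Nat.factorial_succ]
      ring
    · rw [Nat.cast_mul, Nat.cast_mul, hUp,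
        natCast_ascFactorial_congr (m := p * q + r + 1) (n := r + 1) (by simp),
        natCast_ascFactorial_congr (m := p * (q + 1) + 1) (n := 1) (by simp),
        Nat.one_ascFactorial]
      rw [Nat.cast_mul] at hwilson
      linear_combination (-1) ^ q * hwilson

section FactorialProducts

variable {ι ι' κ : Type*} [Fintype ι] [Fintype ι'] [Fintype κ]

def factProd (e : ι → κ → ℕ) (n : κ → ℕ) : ℕ := ∏ i, (∑ j, e i j * n j)!

def factRatio (e : ι → κ → ℕ) (f : ι' → κ → ℕ) (n : κ → ℕ) : ℕ := factProd e n / factProd f n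

def divSum (e : ι → κ → ℕ) (M : ℕ) (n : κ → ℕ) : ℕ := ∑ i, (∑ j, e i j * n j) / M

lemma factProd_ne_zero (e : ι → κ → ℕ) (n : κ → ℕ) : factProd e n ≠ 0 :=
  prod_ne_zero_iff.2 fun _ _ => Nat.factorial_ne_zero _

lemma sum_mul_add_mul (w r q : κ → ℕ) (M : ℕ) :
    ∑ j, w j * (r j + q j * M) = M * ∑ j, w j * q j + ∑ j, w j * r j := by
  rw [mul_sum, ← sum_add_distrib]
  exact sum_congr rfl fun j _ => by ring

lemma sum_sum_mul_eq_of_sum_eq {e : ι → κ → ℕ} {f : ι' → κ → ℕ}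
    (hef : ∀ j, ∑ i, e i j = ∑ i, f i j) (w : κ → ℕ) :
    ∑ i, ∑ j, e i j * w j = ∑ i, ∑ j, f i j * w j := by
  rw [sum_comm, sum_comm (s := univ) (t := univ) (f := fun i j => f i j * w j)]
  simp only [← sum_mul, hef]

lemma divSum_add_mul (e : ι → κ → ℕ) {M : ℕ} (hM : 0 < M) (r q : κ → ℕ) :
    divSum e M (fun j => r j + q j * M) = ∑ i, ∑ j, e i j * q j + divSum e M r := by
  simp only [divSum, sum_mul_add_mul, Nat.mul_add_div hM, sum_add_distrib]

lemma divSum_eq_zero {e : ι → κ → ℕ} {M : ℕ} {r : κ → ℕ} (h : ∀ i, ∑ j, e i j * r j < M) :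
    divSum e M r = 0 :=
  sum_eq_zero fun i _ => Nat.div_eq_of_lt (h i)

lemma factorization_factProd {p : ℕ} (hp : p.Prime) (e : ι → κ → ℕ) (n : κ → ℕ) {b : ℕ}
    (hb : ∀ i, ∑ j, e i j * n j < b) :
    (factProd e n).factorization p = ∑ k ∈ Ico 1 b, divSum e (p ^ k) n := by
  have := Fact.mk hp
  rw [factProd, Nat.factorization_prod fun _ _ => Nat.factorial_ne_zero _,
    Finsupp.finsetSum_apply]
  simp only [divSum]
  rw [sum_comm]
  refine sum_congr rfl fun i _ => ?_
  rw [Nat.factorization_def _ hp, padicValNat_factorial ((Nat.log_le_self _ _).trans_lt (hb i))]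

lemma sum_mul_natCast_div (w r : κ → ℕ) (M : ℕ) :
    ∑ j, (w j : ℝ) * ((r j : ℝ) / M) = ((∑ j, w j * r j : ℕ) : ℝ) / M := by
  push_cast
  rw [sum_div]
  simp only [mul_div_assoc]

lemma exists_factProd_add_mul_eq {p : ℕ} (hp : p.Prime)
    (e : ι → κ → ℕ) {a : κ → ℕ} (ha : ∀ i, ∑ j, e i j * a j < p) (n : κ → ℕ) :
    ∃ U : ℕ, factProd e (fun j => a j + n j * p)
        = p ^ (∑ i, ∑ j, e i j * n j) * factProd e n * factProd e a * U ∧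
      (U : ZMod p) = (-1) ^ (∑ i, ∑ j, e i j * n j) := by
  choose U hU hUp using fun i => exists_factorial_mul_add_eq hp (ha i) (∑ j, e i j * n j)
  refine ⟨∏ i, U i, ?_, ?_⟩
  · simp only [factProd, sum_mul_add_mul, hU, prod_mul_distrib, prod_pow_eq_pow_sum]
  · rw [Nat.cast_prod]
    simp only [hUp, prod_pow_eq_pow_sum]

end FactorialProducts

section LandauCriterion

variable {d u v : ℕ} (e : Fin u → Fin d → ℕ) (f : Fin v → Fin d → ℕ)

def LandauGeOneOnD : Prop :=
  ∀ x : Fin d → ℝ, (∀ j, 0 ≤ x j ∧ x j < 1) →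
    ((∃ i, 1 ≤ ∑ j, (e i j : ℝ) * x j) ∨ (∃ i, 1 ≤ ∑ j, (f i j : ℝ) * x j)) →
    1 ≤ Landau e f x

lemma landau_natCast_div (M : ℕ) (r : Fin d → ℕ) :
    Landau e f (fun j => (r j : ℝ) / M) = (divSum e M r : ℤ) - divSum f M r := by
  simp only [Landau, divSum, sum_mul_natCast_div, Int.floor_div_natCast, Int.floor_natCast]
  push_cast
  rfl

variable {e f}

lemma divSum_lt_of_landau (hΔ : LandauGeOneOnD e f) {M : ℕ} (hM : 0 < M) {r : Fin d → ℕ}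
    (hr : ∀ j, r j < M) (hD : (∃ i, M ≤ ∑ j, e i j * r j) ∨ ∃ i, M ≤ ∑ j, f i j * r j) :
    divSum f M r < divSum e M r := by
  have hMR : (0 : ℝ) < M := by exact_mod_cast hM
  have hone : ∀ w : Fin d → ℕ, M ≤ ∑ j, w j * r j → 1 ≤ ∑ j, (w j : ℝ) * ((r j : ℝ) / M) := by
    intro w hw
    rw [sum_mul_natCast_div, one_le_div hMR]
    exact_mod_cast hw
  have := hΔ (fun j => (r j : ℝ) / M)
    (fun j => ⟨by positivity, (div_lt_one hMR).2 (by exact_mod_cast hr j)⟩)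
    (hD.imp (fun ⟨i, hi⟩ => ⟨i, hone _ hi⟩) (fun ⟨i, hi⟩ => ⟨i, hone _ hi⟩))
  rw [landau_natCast_div] at this
  omega

lemma divSum_le_of_landau (hΔ : LandauGeOneOnD e f) {M : ℕ} (hM : 0 < M) {r : Fin d → ℕ}
    (hr : ∀ j, r j < M) : divSum f M r ≤ divSum e M r := by
  by_cases hD : (∃ i, M ≤ ∑ j, e i j * r j) ∨ ∃ i, M ≤ ∑ j, f i j * r j
  · exact (divSum_lt_of_landau hΔ hM hr hD).le
  · push Not at hD
    rw [divSum_eq_zero hD.1, divSum_eq_zero hD.2]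

variable (hef : ∀ j, ∑ i, e i j = ∑ i, f i j) (hΔ : LandauGeOneOnD e f)
include hef hΔ

lemma divSum_le {M : ℕ} (hM : 0 < M) (n : Fin d → ℕ) : divSum f M n ≤ divSum e M n := by
  obtain ⟨r, q, hr, rfl⟩ : ∃ r q : Fin d → ℕ, (∀ j, r j < M) ∧ n = fun j => r j + q j * M :=
    ⟨_, _, fun j => Nat.mod_lt (n j) hM, funext fun j => (Nat.mod_add_div' (n j) M).symm⟩
  rw [divSum_add_mul _ hM, divSum_add_mul _ hM, sum_sum_mul_eq_of_sum_eq hef]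
  exact Nat.add_le_add_left (divSum_le_of_landau hΔ hM hr) _

lemma factorization_factProd_add_le {p : ℕ} (hp : p.Prime) (n : Fin d → ℕ) :
    (factProd f n).factorization p + (divSum e p n - divSum f p n)
      ≤ (factProd e n).factorization p := by
  set b := ∑ i, ∑ j, e i j * n j + 2 with hb
  have hbe : ∀ i, ∑ j, e i j * n j < b := fun i => by
    have := single_le_sum (f := fun i => ∑ j, e i j * n j) (fun _ _ => Nat.zero_le _) (mem_univ i)
    omega
  have hbf : ∀ i, ∑ j, f i j * n j < b := fun i => by
    have := single_le_sum (f := fun i => ∑ j, f i j * n j) (fun _ _ => Nat.zero_le _) (mem_univ i)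
    rw [← sum_sum_mul_eq_of_sum_eq hef] at this
    omega
  rw [factorization_factProd hp _ _ hbe, factorization_factProd hp _ _ hbf,
    sum_eq_sum_Ico_succ_bot (by omega) (fun k => divSum e (p ^ k) n),
    sum_eq_sum_Ico_succ_bot (by omega) (fun k => divSum f (p ^ k) n), pow_one,
    one_add_one_eq_two]
  have := sum_le_sum fun k (_ : k ∈ Ico 2 b) => divSum_le hef hΔ (pow_pos hp.pos k) n
  have := divSum_le hef hΔ hp.pos n
  omega

lemma factProd_dvd (n : Fin d → ℕ) : factProd f n ∣ factProd e n :=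
  (Nat.factorization_prime_le_iff_dvd (factProd_ne_zero _ _) (factProd_ne_zero _ _)).1
    fun _ hp => le_of_add_le_left (factorization_factProd_add_le hef hΔ hp n)

lemma prime_mul_factProd_dvd {p : ℕ} (hp : p.Prime) {n : Fin d → ℕ}
    (h : divSum f p n < divSum e p n) : p * factProd f n ∣ factProd e n := by
  refine (Nat.factorization_prime_le_iff_dvd (mul_ne_zero hp.ne_zero (factProd_ne_zero _ _))
    (factProd_ne_zero _ _)).1 fun q hq => ?_
  have := factorization_factProd_add_le hef hΔ hq n
  rw [Nat.factorization_mul hp.ne_zero (factProd_ne_zero _ _), Finsupp.add_apply,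
    hp.factorization, Finsupp.single_apply]
  split_ifs with hpq
  · subst hpq
    omega
  · omega

lemma Qef_eq_factRatio (n : Fin d → ℕ) : Qef e f n = factRatio e f n := by
  rw [factRatio, Nat.cast_div (factProd_dvd hef hΔ n) (by exact_mod_cast factProd_ne_zero f n),
    Qef, factProd, factProd, Nat.cast_prod, Nat.cast_prod]

lemma factRatio_mul_factProd (n : Fin d → ℕ) : factRatio e f n * factProd f n = factProd e n :=
  Nat.div_mul_cancel (factProd_dvd hef hΔ n)

lemma prime_dvd_factRatio {p : ℕ} (hp : p.Prime) {n : Fin d → ℕ}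
    (h : divSum f p n < divSum e p n) : p ∣ factRatio e f n :=
  (Nat.dvd_div_iff_mul_dvd (factProd_dvd hef hΔ n)).2 <|
    mul_comm p _ ▸ prime_mul_factProd_dvd hef hΔ hp h

lemma factRatio_add_mul_of_lt {p : ℕ} (hp : p.Prime) {a : Fin d → ℕ}
    (hae : ∀ i, ∑ j, e i j * a j < p) (haf : ∀ i, ∑ j, f i j * a j < p) (n : Fin d → ℕ) :
    (factRatio e f (fun j => a j + n j * p) : ZMod p) = factRatio e f a * factRatio e f n := by
  obtain ⟨U, hU, hUp⟩ := exists_factProd_add_mul_eq hp e hae n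
  obtain ⟨V, hV, hVp⟩ := exists_factProd_add_mul_eq hp f haf n
  rw [← sum_sum_mul_eq_of_sum_eq hef] at hV hVp
  set K := p ^ (∑ i, ∑ j, e i j * n j) * factProd f n * factProd f a
  have hK : 0 < K :=
    Nat.pos_of_ne_zero (by simp [K, hp.ne_zero, factProd_ne_zero])
  have hcancel : factRatio e f (fun j => a j + n j * p) * V
      = factRatio e f a * factRatio e f n * U := by
    refine Nat.eq_of_mul_eq_mul_right hK ?_
    calc _ = factRatio e f (fun j => a j + n j * p) * factProd f (fun j => a j + n j * p) := by
          rw [hV]; ring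
      _ = p ^ (∑ i, ∑ j, e i j * n j) * factProd e n * factProd e a * U := by
          rw [factRatio_mul_factProd hef hΔ, hU]
      _ = _ := by
          rw [← factRatio_mul_factProd hef hΔ n, ← factRatio_mul_factProd hef hΔ a]; ring
  have := congrArg (Nat.cast : ℕ → ZMod p) hcancel
  push_cast [hUp, hVp] at this
  exact (isUnit_one.neg.pow _).mul_right_cancel this

lemma factRatio_add_mul_prime {p : ℕ} (hp : p.Prime) {a : Fin d → ℕ} (ha : ∀ j, a j < p)
    (n : Fin d → ℕ) :
    (factRatio e f (fun j => a j + n j * p) : ZMod p) = factRatio e f a * factRatio e f n := by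
  by_cases hD : (∃ i, p ≤ ∑ j, e i j * a j) ∨ ∃ i, p ≤ ∑ j, f i j * a j
  · have hlt := divSum_lt_of_landau hΔ hp.pos ha hD
    have hlt' : divSum f p (fun j => a j + n j * p) < divSum e p (fun j => a j + n j * p) := by
      rw [divSum_add_mul _ hp.pos, divSum_add_mul _ hp.pos, sum_sum_mul_eq_of_sum_eq hef]
      omega
    rw [(ZMod.natCast_eq_zero_iff _ p).2 (prime_dvd_factRatio hef hΔ hp hlt'),
      (ZMod.natCast_eq_zero_iff _ p).2 (prime_dvd_factRatio hef hΔ hp hlt), zero_mul]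
  · push Not at hD
    exact factRatio_add_mul_of_lt hef hΔ hp hD.1 hD.2 n

end LandauCriterion

theorem factorial_ratio_integral_and_lucas (d u v : ℕ)
    (e : Fin u → Fin d → ℕ) (f : Fin v → Fin d → ℕ)
    (hef : ∀ j, ∑ i, e i j = ∑ i, f i j)
    (hΔ : ∀ x : Fin d → ℝ, (∀ j, 0 ≤ x j ∧ x j < 1) →
      ((∃ i, 1 ≤ ∑ j, (e i j : ℝ) * x j) ∨ (∃ i, 1 ≤ ∑ j, (f i j : ℝ) * x j)) →
      1 ≤ Landau e f x) :
    (∀ n : Fin d → ℕ, ∃ z : ℤ, Qef e f n = z) ∧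
      (∀ p : ℕ, p.Prime → ∀ a n : Fin d → ℕ, (∀ j, a j < p) →
        ∃ z : ℤ, Qef e f (fun j => a j + n j * p) - Qef e f a * Qef e f n = p * z) := by
  refine ⟨fun n => ⟨factRatio e f n, by rw [Qef_eq_factRatio hef hΔ]; norm_cast⟩,
    fun p hp a n ha => ?_⟩
  have hlucas : ((factRatio e f (fun j => a j + n j * p) - factRatio e f a * factRatio e f n : ℤ)
      : ZMod p) = 0 := by
    push_cast
    rw [factRatio_add_mul_prime hef hΔ hp ha n, sub_self]
  obtain ⟨z, hz⟩ := (ZMod.intCast_zmod_eq_zero_iff_dvd _ p).1 hlucas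
  refine ⟨z, ?_⟩
  simp only [Qef_eq_factRatio hef hΔ]
  exact_mod_cast hz
end
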